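/- Let α₀ > 0, β > 0 and Re > 0 be constants and set A₀ := α₀/β. Suppose H₀, H₁, F : [0,∞) → ℝ are continuous and nonnegative, H₀ is differentiable, F(t) ≥ H₀(t)² for all t ≥ 0, and the energy inequality (1/2)·H₀'(t) + Re⁻¹·H₁(t) + β·F(t) ≤ α₀·H₀(t) holds for all t ≥ 0. Then for every T > 0 the time average of F satisfies ⟨F⟩_T ≤ A₀·( A₀ + √(H₀(0)/(2βT)) ) + H₀(0)/(2βT). -/

import Mathlib

/-! Integrating the energy inequality, with the enstrophy term dropped, gives
`⟨F⟩ ≤ A₀ ⟨H₀⟩ + c` with `c = H₀(0)/(2βT)`, while Jensen and `H₀² ≤ F` give `⟨H₀⟩² ≤ ⟨F⟩`.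
So `x = ⟨H₀⟩` satisfies `x² ≤ A₀ x + c`, whence `x ≤ A₀ + √c`; substituting back into the first
bound yields the claim. -/

open MeasureTheory Set
open scoped Interval

theorem sq_average_le_average_sq {α : Type*} [MeasurableSpace α] {μ : Measure α}
    [IsFiniteMeasure μ] {f : α → ℝ} (hf : Integrable f μ) (hf2 : Integrable (fun x => f x ^ 2) μ) :
    (⨍ x, f x ∂μ) ^ 2 ≤ ⨍ x, f x ^ 2 ∂μ := by
  rcases eq_zero_or_neZero μ with rfl | _
  · simp
  exact even_two.convexOn_pow.map_average_le (continuous_pow 2).continuousOn isClosed_univ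
    (by simp) hf hf2

theorem sq_intervalAverage_le_intervalAverage_sq {f : ℝ → ℝ} {a b : ℝ}
    (hf : IntervalIntegrable f volume a b)
    (hf2 : IntervalIntegrable (fun t => f t ^ 2) volume a b) :
    (⨍ t in a..b, f t) ^ 2 ≤ ⨍ t in a..b, f t ^ 2 :=
  have : IsFiniteMeasure (volume.restrict (Ι a b)) := isFiniteMeasure_restrict.2
    ((measure_mono uIoc_subset_uIcc).trans_lt isCompact_uIcc.measure_lt_top).ne
  sq_average_le_average_sq hf.def' hf2.def'

theorem le_add_sqrt_of_sq_le_mul_add {A c x : ℝ} (hA : 0 ≤ A) (hc : 0 ≤ c)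
    (h : x ^ 2 ≤ A * x + c) : x ≤ A + √c := by
  by_contra! hx
  nlinarith [Real.sqrt_nonneg c, Real.sq_sqrt hc]

theorem le_mul_add_sqrt_add_of_sq_le_of_le_mul_add {A c x y : ℝ} (hA : 0 ≤ A) (hc : 0 ≤ c)
    (hxy : x ^ 2 ≤ y) (hyx : y ≤ A * x + c) : y ≤ A * (A + √c) + c :=
  hyx.trans <| by
    gcongr
    exact le_add_sqrt_of_sq_le_mul_add hA hc (hxy.trans hyx)

theorem intervalAverage_le_of_half_deriv_le {α β a b : ℝ} {H H' F : ℝ → ℝ} (hβ : 0 < β)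
    (hab : a < b) (hH : ∀ t ∈ Icc a b, HasDerivAt H (H' t) t) (hF : ContinuousOn F (Icc a b))
    (hdiss : ∀ t ∈ Ioo a b, (1 / 2) * H' t ≤ α * H t - β * F t) (hHb : 0 ≤ H b) :
    ⨍ t in a..b, F t ≤ α / β * (⨍ t in a..b, H t) + H a / (2 * β * (b - a)) := by
  have hHc : ContinuousOn H (Icc a b) := fun t ht => (hH t ht).continuousAt.continuousWithinAt
  have hHi : IntervalIntegrable H volume a b := hHc.intervalIntegrable_of_Icc hab.le
  have hFi : IntervalIntegrable F volume a b := hF.intervalIntegrable_of_Icc hab.le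
  have hftc : H b - H a ≤ ∫ t in a..b, (2 * α * H t - 2 * β * F t) :=
    intervalIntegral.sub_le_integral_of_hasDeriv_right_of_le hab.le hHc
      (fun t ht => (hH t (Ioo_subset_Icc_self ht)).hasDerivWithinAt)
      (((continuousOn_const.mul hHc).sub (continuousOn_const.mul hF)).integrableOn_Icc)
      (fun t ht => by linarith [hdiss t ht])
  rw [intervalIntegral.integral_sub (hHi.const_mul _) (hFi.const_mul _),
    intervalIntegral.integral_const_mul, intervalIntegral.integral_const_mul] at hftc
  rw [interval_average_eq_div, interval_average_eq_div]
  generalize ∫ t in a..b, F t = I at hftc ⊢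
  generalize ∫ t in a..b, H t = J at hftc ⊢
  have hba : 0 < b - a := sub_pos.2 hab
  rw [div_le_iff₀ hba]
  field_simp
  nlinarith

theorem toner_tu_time_averaged_quartic_general (α₀ β Re : ℝ)
    (hα : 0 < α₀) (hβ : 0 < β) (hRe : 0 < Re)
    (H₀ H₀' H₁ F : ℝ → ℝ)
    (hFc : ContinuousOn F (Set.Ici (0:ℝ)))
    (hderiv : ∀ t ≥ (0:ℝ), HasDerivAt H₀ (H₀' t) t)
    (hH₀nn : ∀ t ≥ (0:ℝ), 0 ≤ H₀ t)
    (hH₁nn : ∀ t ≥ (0:ℝ), 0 ≤ H₁ t)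
    (hFH₀ : ∀ t ≥ (0:ℝ), (H₀ t)^2 ≤ F t)
    (hineq : ∀ t ≥ (0:ℝ), (1/2) * H₀' t + Re⁻¹ * H₁ t + β * F t ≤ α₀ * H₀ t)
    (T : ℝ) (hT : 0 < T) :
    (1/T) * ∫ τ in (0:ℝ)..T, F τ ≤
      (α₀ / β) * (α₀ / β + Real.sqrt (H₀ 0 / (2 * β * T))) + H₀ 0 / (2 * β * T) := by
  have hH₀c : ContinuousOn H₀ (Icc 0 T) :=
    fun t ht => (hderiv t ht.1).continuousAt.continuousWithinAt
  have hFc' : ContinuousOn F (Icc 0 T) := hFc.mono Icc_subset_Ici_self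
  have hdiss (t : ℝ) (ht : t ∈ Ioo 0 T) : (1 / 2) * H₀' t ≤ α₀ * H₀ t - β * F t := by
    have := mul_nonneg (inv_nonneg.2 hRe.le) (hH₁nn t ht.1.le)
    linarith [hineq t ht.1.le]
  have hlin : ⨍ t in 0..T, F t ≤ α₀ / β * (⨍ t in 0..T, H₀ t) + H₀ 0 / (2 * β * T) := by
    simpa only [sub_zero] using intervalAverage_le_of_half_deriv_le hβ hT
      (fun t ht => hderiv t ht.1) hFc' hdiss (hH₀nn T hT.le)
  have hsq : (⨍ t in 0..T, H₀ t) ^ 2 ≤ ⨍ t in 0..T, F t := by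
    refine (sq_intervalAverage_le_intervalAverage_sq (hH₀c.intervalIntegrable_of_Icc hT.le)
      ((hH₀c.pow 2).intervalIntegrable_of_Icc hT.le)).trans ?_
    rw [interval_average_eq_div, interval_average_eq_div]
    gcongr ?_ / _
    exact intervalIntegral.integral_mono_on hT.le ((hH₀c.pow 2).intervalIntegrable_of_Icc hT.le)
      (hFc'.intervalIntegrable_of_Icc hT.le) fun t ht => hFH₀ t ht.1
  have havg : (1 / T) * ∫ τ in (0:ℝ)..T, F τ = ⨍ t in 0..T, F t := by
    rw [interval_average_eq, sub_zero, smul_eq_mul, one_div]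
  rw [havg]
  exact le_mul_add_sqrt_add_of_sq_le_of_le_mul_add (div_pos hα hβ).le
    (div_nonneg (hH₀nn 0 le_rfl) (by positivity)) hsq hlin

/-- Under the Leray-type energy inequality
`(1/2)·H₀' + Re⁻¹·H₁ + β·F ≤ α₀·H₀` with `F ≥ H₀²`, the time average of the
quartic integral satisfies
`⟨F⟩_T ≤ A₀·(A₀ + √(H₀(0)/(2βT))) + H₀(0)/(2βT)` for every `T > 0`,
where `A₀ = α₀/β`. -/
theorem toner_tu_time_averaged_quartic (α₀ β Re : ℝ)
    (hα : 0 < α₀) (hβ : 0 < β) (hRe : 0 < Re)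
    (H₀ H₀' H₁ F : ℝ → ℝ)
    (hH₀c : ContinuousOn H₀ (Set.Ici (0:ℝ)))
    (hH₁c : ContinuousOn H₁ (Set.Ici (0:ℝ)))
    (hFc : ContinuousOn F (Set.Ici (0:ℝ)))
    (hderiv : ∀ t ≥ (0:ℝ), HasDerivAt H₀ (H₀' t) t)
    (hH₀nn : ∀ t ≥ (0:ℝ), 0 ≤ H₀ t)
    (hH₁nn : ∀ t ≥ (0:ℝ), 0 ≤ H₁ t)
    (hFnn : ∀ t ≥ (0:ℝ), 0 ≤ F t)
    (hFH₀ : ∀ t ≥ (0:ℝ), (H₀ t)^2 ≤ F t)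
    (hineq : ∀ t ≥ (0:ℝ), (1/2) * H₀' t + Re⁻¹ * H₁ t + β * F t ≤ α₀ * H₀ t)
    (T : ℝ) (hT : 0 < T) :
    (1/T) * ∫ τ in (0:ℝ)..T, F τ ≤
      (α₀ / β) * (α₀ / β + Real.sqrt (H₀ 0 / (2 * β * T))) + H₀ 0 / (2 * β * T) :=
  toner_tu_time_averaged_quartic_general α₀ β Re hα hβ hRe H₀ H₀' H₁ F hFc hderiv hH₀nn hH₁nn hFH₀
    hineq T hT
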